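/- arXiv:1809.01320 — 5 statements merged into one kernel-verified Lean document; each statement's English description precedes it below -/
import Mathlib

section
/- Let m, m' ∈ {0,1}^n with m ≠ m' and let i* = ind(m, m') be the index of their most significant differing bit. Then for every index i with i* ≤ i ≤ n, the encodings differ: E_0(i, m) ≠ E_0(i, m'). -/
/-- `prefixBits m i` is the list of bits of `m` strictly before index `i`
(the bits `x₁ ⋯ x_{i-1}` in 1-based paper notation). -/
def prefixBits {n : ℕ} (m : Fin n → Bool) (i : Fin n) : List Bool :=
  (List.ofFn m).take i.val

/-- `E0 m i = prefix(m,i) ∥ 0 ∥ xᵢ`. -/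
def E0 {n : ℕ} (m : Fin n → Bool) (i : Fin n) : List Bool :=
  prefixBits m i ++ [false, m i]

/-- `E1 m i = prefix(m,i) ∥ (xᵢ + 1)` written as two bits: `01` if `xᵢ = 0`, `10` if `xᵢ = 1`. -/
def E1 {n : ℕ} (m : Fin n → Bool) (i : Fin n) : List Bool :=
  prefixBits m i ++ (if m i then [true, false] else [false, true])

/-- The numeric value of an `n`-bit string, most significant bit first. -/
def msgVal {n : ℕ} (m : Fin n → Bool) : ℕ :=
  ∑ i : Fin n, if m i then 2 ^ (n - 1 - i.val) else 0

/-- The value of a bit string as a binary integer, most significant bit first. -/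
def bitsVal (l : List Bool) : ℕ :=
  l.foldl (fun acc b => 2 * acc + (if b then 1 else 0)) 0

/-- at and above the most significant differing bit, the `E0` encodings differ. -/
theorem differ_from_msdb {n : ℕ} (m m' : Fin n → Bool) (istar : Fin n)
    (hd : m istar ≠ m' istar) (hmin : ∀ k : Fin n, k < istar → m k = m' k) :
    ∀ i : Fin n, istar ≤ i → E0 m i ≠ E0 m' i := by
  intro i hi h
  unfold E0 prefixBits at h
  have hlen : ((List.ofFn m).take i.val).length = ((List.ofFn m').take i.val).length := by
    simp
  have hpre := List.append_inj_left h hlen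
  have htail := List.append_inj_right h hlen
  rcases lt_or_eq_of_le hi with hlt | heq
  · -- istar < i, prefixes contain index istar
    have hlen2 : istar.val < ((List.ofFn m).take i.val).length := by
      simp [Nat.lt_min]
      exact hlt
    have hlen2' : istar.val < ((List.ofFn m').take i.val).length := by
      simp [Nat.lt_min]
      exact hlt
    have := congrArg (fun l : List Bool => l[istar.val]?) hpre
    simp only [List.getElem?_eq_getElem hlen2, List.getElem?_eq_getElem hlen2'] at this
    simp [List.getElem_take, List.getElem_ofFn] at this
    exact hd this
  · have : m i = m' i := by
      have := congrArg (fun l : List Bool => l[1]?) htail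
      simpa using this
    apply hd
    have hii : istar = i := Fin.ext (by exact_mod_cast congrArg Fin.val heq)
    rw [hii]; exact this
end

section
/- Let m, m' ∈ {0,1}^n with val(m) < val(m'), and let i* = ind(m, m') be the index of their most significant differing bit. Then E_1(i*, m) = E_0(i*, m'). -/
lemma geomTwoSumLt (t : ℕ) : ∑ j ∈ Finset.range t, 2 ^ j < 2 ^ t := by
  induction t with
  | zero => simp
  | succ t ih =>
    rw [Finset.sum_range_succ, pow_succ]
    omega

lemma sum_split {n : ℕ} (istar : Fin n) (g : Fin n → ℕ) :
    ∑ i, g i = (∑ i ∈ Finset.univ.filter (· < istar), g i) + g istar +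
      ∑ i ∈ Finset.univ.filter (istar < ·), g i := by
  rw [← Finset.sum_filter_add_sum_filter_not Finset.univ (· < istar)]
  have h1 : Finset.univ.filter (fun i : Fin n => ¬ i < istar) =
      insert istar (Finset.univ.filter (fun i => istar < i)) := by
    ext i
    simp only [Finset.mem_filter, Finset.mem_univ, true_and, Finset.mem_insert,
      Fin.lt_def, Fin.ext_iff]
    omega
  rw [h1, Finset.sum_insert (by simp), add_assoc]

lemma tail_lt {n : ℕ} (istar : Fin n) (f : Fin n → Bool) :
    ∑ i ∈ Finset.univ.filter (istar < ·),
      (if f i then 2 ^ (n - 1 - i.val) else 0) < 2 ^ (n - 1 - istar.val) := by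
  calc ∑ i ∈ Finset.univ.filter (istar < ·), (if f i then 2 ^ (n - 1 - i.val) else 0)
      ≤ ∑ i ∈ Finset.univ.filter (istar < ·), 2 ^ (n - 1 - i.val) := by
        apply Finset.sum_le_sum; intro i _; split <;> simp
    _ = ∑ j ∈ Finset.range (n - 1 - istar.val), 2 ^ j := by
        apply Finset.sum_nbij' (fun i => n - 1 - i.val)
          (fun j => ⟨n - 1 - j, by have := istar.isLt; omega⟩)
        · intro a ha
          simp only [Finset.mem_filter, Finset.mem_univ, true_and, Fin.lt_def] at ha
          simp only [Finset.mem_range]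
          have := a.isLt
          omega
        · intro a ha
          simp only [Finset.mem_range] at ha
          simp only [Finset.mem_filter, Finset.mem_univ, true_and, Fin.lt_def]
          have := istar.isLt
          omega
        · intro a ha
          simp only [Finset.mem_filter, Finset.mem_univ, true_and, Fin.lt_def] at ha
          have := a.isLt
          ext
          simp
          omega
        · intro a ha
          simp only [Finset.mem_range] at ha
          simp
          omega
        · intro a _; rfl
    _ < 2 ^ (n - 1 - istar.val) := geomTwoSumLt _

/-- if `val(m) < val(m')` and `i*` is the most significant differing bit,
then `E1(i*, m) = E0(i*, m')`. -/
theorem E1_eq_E0_at_msdb {n : ℕ} (m m' : Fin n → Bool)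
    (hlt : msgVal m < msgVal m') (istar : Fin n)
    (hd : m istar ≠ m' istar) (hmin : ∀ k : Fin n, k < istar → m k = m' k) :
    E1 m istar = E0 m' istar := by
  have hm : m istar = false := by
    by_contra h
    have hm : m istar = true := by simpa using h
    have hm' : m' istar = false := by
      cases h' : m' istar
      · rfl
      · exact absurd (hm.trans h'.symm) hd
    -- show msgVal m' < msgVal m, contradiction
    have h1 := sum_split istar (fun i => if m i then 2 ^ (n - 1 - i.val) else 0)
    have h2 := sum_split istar (fun i => if m' i then 2 ^ (n - 1 - i.val) else 0)
    have hpre : (∑ i ∈ Finset.univ.filter (· < istar),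
        (if m i then 2 ^ (n - 1 - i.val) else 0)) =
        ∑ i ∈ Finset.univ.filter (· < istar),
        (if m' i then 2 ^ (n - 1 - i.val) else 0) := by
      apply Finset.sum_congr rfl
      intro i hi
      simp only [Finset.mem_filter] at hi
      rw [hmin i hi.2]
    have htail := tail_lt istar m'
    have : msgVal m' < msgVal m := by
      unfold msgVal
      rw [h1, h2, hm, hm', hpre]
      simp only [if_true, Bool.false_eq_true, if_false]
      omega
    omega
  have hm' : m' istar = true := by
    cases h' : m' istar
    · exact absurd (hm.trans h'.symm) hd
    · rfl
  have hpre : prefixBits m istar = prefixBits m' istar := by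
    unfold prefixBits
    apply List.ext_getElem
    · simp
    · intro j h1 h2
      simp only [List.getElem_take, List.getElem_ofFn]
      simp only [List.length_take, List.length_ofFn] at h1
      exact hmin ⟨j, by omega⟩ (by simp only [Fin.lt_def]; omega)
  rw [E1, E0, hpre, hm, hm']
  simp
end

section
/- Let m = x_1 ⋯ x_n and m' = x'_1 ⋯ x'_n be n-bit strings and i ∈ [n]. Then E_1(i, m) = E_0(i, m') if and only if prefix(m, i) = prefix(m', i), x_i = 0, and x'_i = 1. Consequently, if E_1(i, m) = E_0(i, m') holds for an index i at which E_0(i, m) ≠ E_0(i, m'), then i = ind(m, m') and val(m) < val(m'). -/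
theorem prefixBits_length {n : ℕ} (m : Fin n → Bool) (i : Fin n) :
    (prefixBits m i).length = i := by
  simp [prefixBits, i.isLt.le]

theorem prefixBits_eq_prefixBits_iff {n : ℕ} {m m' : Fin n → Bool} {i : Fin n} :
    prefixBits m i = prefixBits m' i ↔ ∀ k < i, m k = m' k := by
  simp only [prefixBits, List.ext_get_iff, List.length_take, List.length_ofFn, List.get_eq_getElem,
    List.getElem_take, List.getElem_ofFn, true_and]
  exact ⟨fun h k hk => h k (by simp [hk]) (by simp [hk]),
    fun h k hk _ => h ⟨k, by omega⟩ (by simp only [Fin.lt_def]; omega)⟩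

theorem E1_eq_E0_iff_prefixBits_eq {n : ℕ} {m m' : Fin n → Bool} {i : Fin n} :
    E1 m i = E0 m' i ↔ prefixBits m i = prefixBits m' i ∧ m i = false ∧ m' i = true := by
  have hlen : (prefixBits m i).length = (prefixBits m' i).length := by
    rw [prefixBits_length, prefixBits_length]
  constructor
  · intro h
    obtain ⟨hpre, htail⟩ := List.append_inj h hlen
    cases hmi : m i <;> simp_all
  · rintro ⟨hpre, hi, hi'⟩
    simp [E1, E0, hpre, hi, hi']

theorem msgVal_succ {n : ℕ} (m : Fin (n + 1) → Bool) :
    msgVal m = (if m 0 then 2 ^ n else 0) + msgVal (Fin.tail m) := by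
  simp [msgVal, Fin.sum_univ_succ, Fin.tail, Nat.sub_sub, Nat.add_comm]

theorem msgVal_lt_two_pow {n : ℕ} (m : Fin n → Bool) : msgVal m < 2 ^ n := by
  induction n with
  | zero => simp [msgVal]
  | succ n ih =>
    rw [msgVal_succ, pow_succ]
    have := ih (Fin.tail m)
    split <;> omega

theorem msgVal_lt_msgVal {n : ℕ} {m m' : Fin n → Bool} {i : Fin n}
    (h : ∀ k < i, m k = m' k) (hi : m i = false) (hi' : m' i = true) :
    msgVal m < msgVal m' := by
  induction n with
  | zero => exact i.elim0
  | succ n ih =>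
    rw [msgVal_succ, msgVal_succ]
    induction i using Fin.cases with
    | zero =>
      have := msgVal_lt_two_pow (Fin.tail m)
      simp only [hi, hi', Bool.false_eq_true, if_false, if_true]
      omega
    | succ j =>
      have hhead := h 0 (Fin.succ_pos j)
      have htail : msgVal (Fin.tail m) < msgVal (Fin.tail m') :=
        ih (fun k hk => h k.succ (Fin.succ_lt_succ_iff.mpr hk)) hi hi'
      rw [hhead]
      omega

/-- `E1(i,m) = E0(i,m')` iff the prefixes agree, `xᵢ = 0` and `x'ᵢ = 1`;
consequently, if moreover `E0(i,m) ≠ E0(i,m')`, then `i` is the most significant differing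
bit and `val(m) < val(m')`. -/
theorem E1_eq_E0_iff {n : ℕ} (m m' : Fin n → Bool) (i : Fin n) :
    (E1 m i = E0 m' i ↔
      prefixBits m i = prefixBits m' i ∧ m i = false ∧ m' i = true) ∧
    (E1 m i = E0 m' i → E0 m i ≠ E0 m' i →
      ((m i ≠ m' i ∧ ∀ k : Fin n, k < i → m k = m' k) ∧ msgVal m < msgVal m')) := by
  refine ⟨E1_eq_E0_iff_prefixBits_eq, fun h _ => ?_⟩
  obtain ⟨hpre, hi, hi'⟩ := E1_eq_E0_iff_prefixBits_eq.mp h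
  have hagree := prefixBits_eq_prefixBits_iff.mp hpre
  exact ⟨⟨by simp [hi, hi'], hagree⟩, msgVal_lt_msgVal hagree hi hi'⟩
end

section
/- For m ∈ {0,1}^n, m' ∈ {0,1}^{n'} and indices i ∈ [n], i' ∈ [n'], E_0(i, m) = E_1(i', m') holds as bit strings if and only if i = i', prefix(m, i) = prefix(m', i), x_i = 1, and x'_i = 0. In particular, E_0(i, m) ≠ E_1(i, m) for every i and m. -/
/-- `E0(i,m) = E1(i',m')` iff `i = i'`, the prefixes agree, `xᵢ = 1` and
`x'ᵢ = 0`; in particular `E0(i,m) ≠ E1(i,m)` for every `i` and `m`. -/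
theorem E0_eq_E1_iff :
    (∀ (n n' : ℕ) (m : Fin n → Bool) (m' : Fin n' → Bool) (i : Fin n) (i' : Fin n'),
      E0 m i = E1 m' i' ↔
        i.val = i'.val ∧ prefixBits m i = prefixBits m' i' ∧
          m i = true ∧ m' i' = false) ∧
    (∀ (n : ℕ) (m : Fin n → Bool) (i : Fin n), E0 m i ≠ E1 m i) := by

  have hlen : ∀ {n : ℕ} (m : Fin n → Bool) (i : Fin n), (prefixBits m i).length = i.val := by
    intro n m i
    simp [prefixBits, List.length_take, Nat.min_eq_left (le_of_lt i.isLt)]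
  have main : ∀ (n n' : ℕ) (m : Fin n → Bool) (m' : Fin n' → Bool) (i : Fin n) (i' : Fin n'),
      E0 m i = E1 m' i' ↔
        i.val = i'.val ∧ prefixBits m i = prefixBits m' i' ∧
          m i = true ∧ m' i' = false := by
    intro n n' m m' i i'
    constructor
    · intro h
      have hl : i.val = i'.val := by
        have := congrArg List.length h
        rcases hmi : m' i' with _ | _ <;>
          simp [E0, E1, hlen, hmi] at this <;> omega
      have hpl : (prefixBits m i).length = (prefixBits m' i').length := by
        rw [hlen, hlen, hl]
      unfold E0 E1 at h
      obtain ⟨hp, ht⟩ := List.append_inj h hpl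
      refine ⟨hl, hp, ?_, ?_⟩ <;> rcases hmi : m' i' with _ | _ <;> simp [hmi] at ht <;> simp_all
    · rintro ⟨hl, hp, h1, h0⟩
      simp [E0, E1, hp, h1, h0]
  refine ⟨main, ?_⟩
  intro n m i h
  rcases (main n n m m i i).1 h with ⟨_, _, h1, h0⟩
  rw [h1] at h0; exact Bool.noConfusion h0
end

section
/- Correctness equalities of the multi-client comparison (basic MC-ORE): let G, Ĝ, G_T be commutative groups with a bilinear map e : G → Ĝ → G_T, H : List Bool → G any function, ĝ ∈ Ĝ, and integers r, s_j, s_k. For n-bit strings m, m' with val(m) < val(m') and i* = ind(m, m'), define C_{i,b} = H(E_b(i, m))^{s_j}, C'_{i,b} = H(E_b(i, m'))^{s_k}, K_0 = (ĝ^{s_j})^r, K_1 = (ĝ^{s_k})^r. Then e(C_{i,0}, K_1) = e(C'_{i,0}, K_0) for all i < i*, and e(C_{i*,1}, K_1) = e(C'_{i*,0}, K_0). -/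
section Pairing

variable {G Ĝ T : Type*} [Group T] (e : G → Ĝ → T)

theorem pairing_zpow_left [Group G] (he : ∀ u u' v, e (u * u') v = e u v * e u' v)
    (u : G) (v : Ĝ) (a : ℤ) : e (u ^ a) v = e u v ^ a :=
  map_zpow (MonoidHom.mk' (e · v) (he · · v)) u a

theorem pairing_zpow_right [Group Ĝ] (he : ∀ u v v', e u (v * v') = e u v * e u v')
    (u : G) (v : Ĝ) (a : ℤ) : e u (v ^ a) = e u v ^ a :=
  map_zpow (MonoidHom.mk' (e u) (he u)) v a

theorem pairing_zpow_zpow_swap [Group G] [Group Ĝ]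
    (he₁ : ∀ u u' v, e (u * u') v = e u v * e u' v)
    (he₂ : ∀ u v v', e u (v * v') = e u v * e u v') (u : G) (v : Ĝ) (a b r : ℤ) :
    e (u ^ a) ((v ^ b) ^ r) = e (u ^ b) ((v ^ a) ^ r) := by
  simp only [pairing_zpow_left e he₁, pairing_zpow_right e he₂, ← zpow_mul]
  ring_nf

end Pairing

section Bits

open Finset

variable {n : ℕ}

theorem sum_two_pow_lt_of_forall_lt (s : Finset (Fin n)) (i : Fin n) (hs : ∀ j ∈ s, i < j) :
    ∑ j ∈ s, 2 ^ (n - 1 - j.val) < 2 ^ (n - 1 - i.val) := by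
  have hinj : Set.InjOn (fun j : Fin n => n - 1 - j.val) s := fun j _ k _ hjk => by
    have hjk' : n - 1 - j.val = n - 1 - k.val := hjk
    have := j.isLt; have := k.isLt; exact Fin.ext (by omega)
  rw [← sum_image hinj]
  refine Nat.geomSum_lt le_rfl fun k hk => ?_
  obtain ⟨j, hj, rfl⟩ := mem_image.mp hk
  have hij : i.val < j.val := hs j hj
  have := j.isLt; omega

theorem msgVal_eq_sum_Iio_add (m : Fin n → Bool) (i : Fin n) :
    msgVal m = ∑ j ∈ Iio i, (if m j then 2 ^ (n - 1 - j.val) else 0) +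
      ((if m i then 2 ^ (n - 1 - i.val) else 0) +
        ∑ j ∈ Ioi i, (if m j then 2 ^ (n - 1 - j.val) else 0)) := by
  rw [msgVal, ← sum_filter_add_sum_filter_not univ (· < i), filter_gt_eq_Iio]
  simp only [not_lt, filter_le_eq_Ici]
  rw [← add_sum_Ioi_eq_sum_Ici]

theorem msgVal_lt_of_first_diff {m m' : Fin n → Bool} {i : Fin n}
    (hagree : ∀ k < i, m k = m' k) (hm : m i = false) (hm' : m' i = true) :
    msgVal m < msgVal m' := by
  have htail : ∑ j ∈ Ioi i, (if m j then 2 ^ (n - 1 - j.val) else 0) < 2 ^ (n - 1 - i.val) := by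
    rw [← sum_filter]
    exact sum_two_pow_lt_of_forall_lt _ i fun j hj => mem_Ioi.mp (mem_filter.mp hj).1
  rw [msgVal_eq_sum_Iio_add m i, msgVal_eq_sum_Iio_add m' i,
    sum_congr rfl fun k hk => by rw [hagree k (mem_Iio.mp hk)], hm, hm']
  simp only [Bool.false_eq_true, if_false, if_true, zero_add, add_lt_add_iff_left]
  omega

theorem eq_false_and_eq_true_of_msgVal_lt {m m' : Fin n → Bool} {i : Fin n}
    (hlt : msgVal m < msgVal m') (hne : m i ≠ m' i) (hagree : ∀ k < i, m k = m' k) :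
    m i = false ∧ m' i = true := by
  cases hm : m i <;> cases hm' : m' i <;> simp only [hm, hm', ne_eq, not_true_eq_false] at hne
  · exact ⟨rfl, rfl⟩
  · exact absurd hlt (msgVal_lt_of_first_diff (fun k hk => (hagree k hk).symm) hm' hm).not_gt

theorem prefixBits_congr {m m' : Fin n → Bool} {i : Fin n} (hagree : ∀ k < i, m k = m' k) :
    prefixBits m i = prefixBits m' i := by
  refine List.ext_getElem (by simp [prefixBits]) fun k hk _ => ?_
  simp only [prefixBits, List.length_take, List.length_ofFn, lt_min_iff] at hk
  simp only [prefixBits, List.getElem_take, List.getElem_ofFn]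
  exact hagree ⟨k, hk.2⟩ hk.1

theorem E0_congr {m m' : Fin n → Bool} {i : Fin n} (hagree : ∀ k ≤ i, m k = m' k) :
    E0 m i = E0 m' i := by
  rw [E0, E0, prefixBits_congr fun k hk => hagree k hk.le, hagree i le_rfl]

theorem E1_eq_E0_of_first_diff {m m' : Fin n → Bool} {i : Fin n}
    (hagree : ∀ k < i, m k = m' k) (hm : m i = false) (hm' : m' i = true) :
    E1 m i = E0 m' i := by
  rw [E1, E0, prefixBits_congr hagree, hm, hm', if_neg Bool.false_ne_true]

end Bits

/-- correctness equalities of the multi-client comparison in the basic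
MC-ORE scheme. -/
theorem compareMC_equalities {G Ghat GT : Type*} [CommGroup G] [CommGroup Ghat] [CommGroup GT]
    (e : G → Ghat → GT)
    (hbil₁ : ∀ (u u' : G) (v : Ghat), e (u * u') v = e u v * e u' v)
    (hbil₂ : ∀ (u : G) (v v' : Ghat), e u (v * v') = e u v * e u v')
    (H : List Bool → G) (ghat : Ghat) (r sj sk : ℤ)
    {n : ℕ} (m m' : Fin n → Bool) (hlt : msgVal m < msgVal m')
    (istar : Fin n) (hd : m istar ≠ m' istar)
    (hmin : ∀ k : Fin n, k < istar → m k = m' k) :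
    (∀ i : Fin n, i < istar →
      e (H (E0 m i) ^ sj) ((ghat ^ sk) ^ r) = e (H (E0 m' i) ^ sk) ((ghat ^ sj) ^ r)) ∧
    e (H (E1 m istar) ^ sj) ((ghat ^ sk) ^ r)
      = e (H (E0 m' istar) ^ sk) ((ghat ^ sj) ^ r) := by
  obtain ⟨hm, hm'⟩ := eq_false_and_eq_true_of_msgVal_lt hlt hd hmin
  refine ⟨fun i hi => ?_, ?_⟩
  · rw [E0_congr fun k hk => hmin k (hk.trans_lt hi)]
    exact pairing_zpow_zpow_swap e hbil₁ hbil₂ _ ghat sj sk r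
  · rw [E1_eq_E0_of_first_diff hmin hm hm']
    exact pairing_zpow_zpow_swap e hbil₁ hbil₂ _ ghat sj sk r
end
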